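/- Let N = (S, C, R) be a deficiency-one chemical reaction network having at least one nonterminal complex, with t terminal strong linkage classes. Let κ ∈ ℝ^R_{>0} be such that Σ_{y→y' ∈ R} κ_{y→y'} (y' − y) = 0 (equivalently, the all-ones vector 1^C lies in Ker(Y ∘ A_κ)). If b^1, ..., b^t is a basis of Ker A_κ with supp(b^i) equal to the i-th terminal strong linkage class, then {1^C, b^1, ..., b^t} is a basis of Ker(Y ∘ A_κ); in particular, dim Ker(Y ∘ A_κ) = 1 + t. -/

import Mathlib

open scoped BigOperators Classical

/-- A chemical reaction network (CRN) on a finite species set `S`: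
complexes are non-negative vectors in `ℝ^S`, reactions are pairs of complexes,
no reaction is a self-loop, and every complex occurs in some reaction. -/
structure CRN (S : Type*) [Fintype S] where
  complexes : Finset (S → ℝ)
  reactions : Finset ((S → ℝ) × (S → ℝ))
  complexes_nonneg : ∀ y ∈ complexes, ∀ i, 0 ≤ y i
  mem_source : ∀ r ∈ reactions, r.1 ∈ complexes
  mem_target : ∀ r ∈ reactions, r.2 ∈ complexes
  ne_of_mem : ∀ r ∈ reactions, r.1 ≠ r.2
  cover : ∀ y ∈ complexes, ∃ y', (y, y') ∈ reactions ∨ (y', y) ∈ reactions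

namespace CRN

variable {S : Type*} [Fintype S] (N : CRN S)

/-- One-step reaction relation on complexes. -/
def step (y y' : S → ℝ) : Prop := (y, y') ∈ N.reactions

/-- Reachability along directed reactions. -/
def reach : (S → ℝ) → (S → ℝ) → Prop := Relation.ReflTransGen N.step

/-- A complex is terminal iff it belongs to a terminal strong linkage class,
i.e. everything reachable from it can reach it back. -/
def IsTerminal (y : S → ℝ) : Prop :=
  y ∈ N.complexes ∧ ∀ y', N.reach y y' → N.reach y' y

/-- A nonterminal complex. -/
def Nonterminal (y : S → ℝ) : Prop := y ∈ N.complexes ∧ ¬ N.IsTerminal y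

/-- The set of terminal strong linkage classes. -/
def tslc : Set (Set (S → ℝ)) :=
  {L | ∃ y, N.IsTerminal y ∧ L = {y' | N.reach y y' ∧ N.reach y' y}}

/-- The number `t` of terminal strong linkage classes. -/
noncomputable def numTSLC : ℕ := Nat.card N.tslc

/-- Undirected connectivity (for linkage classes). -/
def linked : (S → ℝ) → (S → ℝ) → Prop :=
  Relation.ReflTransGen (fun a b => (a, b) ∈ N.reactions ∨ (b, a) ∈ N.reactions)

/-- The set of linkage classes (connected components of the reaction digraph). -/
def linkageClasses : Set (Set (S → ℝ)) :=
  {L | ∃ y ∈ N.complexes, L = {y' | y' ∈ N.complexes ∧ N.linked y y'}}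

/-- The number `ℓ` of linkage classes. -/
noncomputable def numLinkageClasses : ℕ := Nat.card N.linkageClasses

/-- The stoichiometric subspace `S = span{y' - y : y → y'}`. -/
def stoichSubspace : Submodule ℝ (S → ℝ) :=
  Submodule.span ℝ {v | ∃ r ∈ N.reactions, v = r.2 - r.1}

/-- The rank `s` of the network. -/
noncomputable def rank : ℕ := Module.finrank ℝ N.stoichSubspace

/-- The deficiency `δ = n - ℓ - s`. -/
noncomputable def deficiency : ℤ :=
  (N.complexes.card : ℤ) - N.numLinkageClasses - N.rank

/-- The map of complexes `Y : ℝ^C → ℝ^S`, sending `ω_y ↦ y`. -/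
noncomputable def mapY : (↥N.complexes → ℝ) →ₗ[ℝ] (S → ℝ) :=
  ∑ y : ↥N.complexes, (LinearMap.proj y).smulRight (y : S → ℝ)

/-- The incidence map `I_a : ℝ^R → ℝ^C`, sending `ω_{y→y'} ↦ ω_{y'} - ω_y`. -/
noncomputable def incidence : (↥N.reactions → ℝ) →ₗ[ℝ] (↥N.complexes → ℝ) :=
  ∑ r : ↥N.reactions,
    (LinearMap.proj r).smulRight
      (Pi.single (⟨r.1.2, N.mem_target r.1 r.2⟩ : ↥N.complexes) 1
        - Pi.single (⟨r.1.1, N.mem_source r.1 r.2⟩ : ↥N.complexes) 1)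

/-- The Laplacian map `A_k x = Σ_{y→y'} k_{y→y'} x_y (ω_{y'} - ω_y)`. -/
noncomputable def laplacian (k : ↥N.reactions → ℝ) :
    (↥N.complexes → ℝ) →ₗ[ℝ] (↥N.complexes → ℝ) :=
  ∑ r : ↥N.reactions, k r •
    ((LinearMap.proj (⟨r.1.1, N.mem_source r.1 r.2⟩ : ↥N.complexes)).smulRight
      (Pi.single (⟨r.1.2, N.mem_target r.1 r.2⟩ : ↥N.complexes) 1
        - Pi.single (⟨r.1.1, N.mem_source r.1 r.2⟩ : ↥N.complexes) 1))

/-- A positive equilibrium of the PL-RDK system with rate constants `k` and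
kinetic-order assignment (T-matrix) `T`. -/
def IsPosEquilibrium (k : ↥N.reactions → ℝ) (T : (S → ℝ) → (S → ℝ)) (c : S → ℝ) : Prop :=
  (∀ i, 0 < c i) ∧
    ∑ r : ↥N.reactions, (k r * ∏ i, (c i) ^ (T r.1.1 i)) • ((r.1.2 : S → ℝ) - r.1.1) = 0

/-- The set of reactant complexes. -/
def reactantSet : Set (S → ℝ) := {y | ∃ y', (y, y') ∈ N.reactions}

/-- The reactant subspace `R = Im Y_res`. -/
def reactantSubspace : Submodule ℝ (S → ℝ) := Submodule.span ℝ N.reactantSet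

/-- The reactant deficiency `δ_ρ = n_r - q`. -/
noncomputable def reactantDeficiency : ℤ :=
  (Nat.card N.reactantSet : ℤ) - Module.finrank ℝ N.reactantSubspace

end CRN

/-!
Both `1` and `Ker A_κ` lie in `Ker (Y ∘ A_κ)`, and `1` is not in the span of the `b^i`, since
they all vanish at a nonterminal complex; hence `dim Ker (Y ∘ A_κ) ≥ 1 + t`. Conversely, `A_κ`
factors through the incidence map `I`, so it maps `Ker (Y ∘ A_κ)` into `Im I ∩ Ker Y`, of
dimension `dim Im I - s`. Summing coordinates over each linkage class is a surjection onto
`ℝ^ℓ` that kills `Im I`, so `dim Im I ≤ n - ℓ`, and rank–nullity gives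
`dim Ker (Y ∘ A_κ) ≤ dim Ker A_κ + δ = t + 1`.
-/

theorem Submodule.finrank_map_add_finrank_inf_ker {K V W : Type*} [DivisionRing K]
    [AddCommGroup V] [Module K V] [AddCommGroup W] [Module K W] [FiniteDimensional K V]
    (p : Submodule K V) (f : V →ₗ[K] W) :
    Module.finrank K (p.map f) + Module.finrank K ↥(p ⊓ LinearMap.ker f) =
      Module.finrank K p := by
  have hker : LinearMap.ker (f.domRestrict p) ≃ₗ[K] ↥(p ⊓ LinearMap.ker f) := by
    rw [LinearMap.ker_domRestrict, ← top_inf_eq (Submodule.comap _ _),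
      ← Submodule.comap_subtype_self p, ← Submodule.comap_inf]
    exact Submodule.comapSubtypeEquivOfLe inf_le_left
  rw [← hker.finrank_eq, ← LinearMap.range_domRestrict]
  exact LinearMap.finrank_range_add_finrank_ker _

theorem Submodule.one_notMem_span_of_apply_eq_zero {R X ι : Type*} [Semiring R] [Nontrivial R]
    {b : ι → X → R} (x : X) (hb : ∀ i, b i x = 0) :
    (1 : X → R) ∉ Submodule.span R (Set.range b) := by
  have hspan : Submodule.span R (Set.range b) ≤ LinearMap.ker (LinearMap.proj x) :=
    Submodule.span_le.2 <| by rintro _ ⟨i, rfl⟩; exact hb i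
  exact fun h => one_ne_zero (hspan h)

namespace CRN

variable {S : Type*} [Fintype S] (N : CRN S)

def source (r : ↥N.reactions) : ↥N.complexes := ⟨r.1.1, N.mem_source r.1 r.2⟩

def target (r : ↥N.reactions) : ↥N.complexes := ⟨r.1.2, N.mem_target r.1 r.2⟩

theorem mapY_single (y : ↥N.complexes) : N.mapY (Pi.single y 1) = y := by
  simp [mapY, LinearMap.sum_apply, Pi.single_apply]

theorem incidence_apply (w : ↥N.reactions → ℝ) :
    N.incidence w = ∑ r, w r • (Pi.single (N.target r) 1 - Pi.single (N.source r) 1) := by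
  simp [incidence, LinearMap.sum_apply, target, source]

theorem laplacian_apply_eq_incidence (κ : ↥N.reactions → ℝ) (x : ↥N.complexes → ℝ) :
    N.laplacian κ x = N.incidence (fun r => κ r * x (N.source r)) := by
  simp [laplacian, incidence_apply, LinearMap.sum_apply, smul_smul, target, source]

theorem mapY_incidence (w : ↥N.reactions → ℝ) :
    N.mapY (N.incidence w) = ∑ r, w r • ((r.1.2 : S → ℝ) - r.1.1) := by
  simp [incidence_apply, mapY_single, target, source]

theorem mapY_laplacian_one (κ : ↥N.reactions → ℝ) :
    N.mapY (N.laplacian κ 1) = ∑ r, κ r • ((r.1.2 : S → ℝ) - r.1.1) := by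
  simp [laplacian_apply_eq_incidence, mapY_incidence]

theorem range_laplacian_le_range_incidence (κ : ↥N.reactions → ℝ) :
    LinearMap.range (N.laplacian κ) ≤ LinearMap.range N.incidence := by
  rintro _ ⟨x, rfl⟩
  exact ⟨_, (N.laplacian_apply_eq_incidence κ x).symm⟩

theorem map_mapY_range_incidence :
    (LinearMap.range N.incidence).map N.mapY = N.stoichSubspace := by
  have hgen : {v | ∃ r ∈ N.reactions, v = r.2 - r.1} =
      Set.range (fun r : ↥N.reactions => (r.1.2 : S → ℝ) - r.1.1) := by
    ext v
    simp [eq_comm]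
  rw [← LinearMap.range_comp, stoichSubspace, hgen]
  ext v
  simp [Submodule.mem_span_range_iff_exists_fun, mapY_incidence]

theorem linked_symm {a b : S → ℝ} (h : N.linked a b) : N.linked b a :=
  Relation.ReflTransGen.mono (fun _ _ => Or.symm) _ _ (Relation.ReflTransGen.swap _ _ h)

theorem target_mem_linkageClass_iff {L : Set (S → ℝ)} (hL : L ∈ N.linkageClasses)
    (r : ↥N.reactions) : r.1.2 ∈ L ↔ r.1.1 ∈ L := by
  obtain ⟨y, -, rfl⟩ := hL
  have hr : N.linked r.1.1 r.1.2 := .single (Or.inl r.2)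
  exact ⟨fun h => ⟨N.mem_source r.1 r.2, h.2.trans (N.linked_symm hr)⟩,
    fun h => ⟨N.mem_target r.1 r.2, h.2.trans hr⟩⟩

theorem linkageClass_eq_of_mem {L L' : Set (S → ℝ)} (hL : L ∈ N.linkageClasses)
    (hL' : L' ∈ N.linkageClasses) {z : S → ℝ} (hz : z ∈ L) (hz' : z ∈ L') : L = L' := by
  obtain ⟨y, -, rfl⟩ := hL
  obtain ⟨y', -, rfl⟩ := hL'
  ext w
  exact ⟨fun h => ⟨h.1, hz'.2.trans ((N.linked_symm hz.2).trans h.2)⟩,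
    fun h => ⟨h.1, hz.2.trans ((N.linked_symm hz'.2).trans h.2)⟩⟩

instance : Finite N.linkageClasses := by
  refine (N.complexes : Set (S → ℝ)).toFinite.finite_subsets.subset ?_
  rintro _ ⟨y, -, rfl⟩ w hw
  exact hw.1

noncomputable def linkageClassSum :
    (↥N.complexes → ℝ) →ₗ[ℝ] (↥N.linkageClasses → ℝ) where
  toFun x L := ∑ y ∈ Finset.univ.filter (fun y : ↥N.complexes => (y : S → ℝ) ∈ L.1), x y
  map_add' x x' := by ext L; simp [Finset.sum_add_distrib]
  map_smul' c x := by ext L; simp [Finset.mul_sum]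

theorem linkageClassSum_single (y : ↥N.complexes) (L : ↥N.linkageClasses) :
    N.linkageClassSum (Pi.single y 1) L = if (y : S → ℝ) ∈ L.1 then 1 else 0 := by
  simp [linkageClassSum, Pi.single_apply]

theorem linkageClassSum_surjective : Function.Surjective N.linkageClassSum := by
  rw [← LinearMap.range_eq_top, eq_top_iff, ← (Pi.basisFun ℝ _).span_eq, Submodule.span_le]
  rintro _ ⟨L, rfl⟩
  obtain ⟨y, hy, hL⟩ := L.2
  have hyL : y ∈ (L : Set (S → ℝ)) := hL ▸ ⟨hy, .refl⟩
  refine ⟨Pi.single ⟨y, hy⟩ 1, funext fun L' => ?_⟩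
  rw [linkageClassSum_single, Pi.basisFun_apply, Pi.single_apply]
  congr 1
  exact propext ⟨fun h => Subtype.ext (N.linkageClass_eq_of_mem L'.2 L.2 h hyL),
    fun h => h ▸ hyL⟩

theorem range_incidence_le_ker_linkageClassSum :
    LinearMap.range N.incidence ≤ LinearMap.ker N.linkageClassSum := by
  rintro _ ⟨w, rfl⟩
  rw [LinearMap.mem_ker, incidence_apply, map_sum]
  refine Finset.sum_eq_zero fun r _ => funext fun L => ?_
  simp [linkageClassSum_single, target, source, N.target_mem_linkageClass_iff L.2 r]

theorem finrank_range_incidence_add_numLinkageClasses_le :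
    Module.finrank ℝ (LinearMap.range N.incidence) + N.numLinkageClasses ≤
      N.complexes.card := by
  have := Fintype.ofFinite N.linkageClasses
  have hrank := LinearMap.finrank_range_add_finrank_ker N.linkageClassSum
  rw [LinearMap.range_eq_top.2 N.linkageClassSum_surjective, finrank_top,
    Module.finrank_fintype_fun_eq_card, Module.finrank_fintype_fun_eq_card,
    Fintype.card_coe] at hrank
  have hle := Submodule.finrank_mono N.range_incidence_le_ker_linkageClassSum
  rw [numLinkageClasses, Nat.card_eq_fintype_card]
  omega

theorem finrank_range_incidence_inf_ker_mapY_le_deficiency :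
    (Module.finrank ℝ ↥(LinearMap.range N.incidence ⊓ LinearMap.ker N.mapY) : ℤ) ≤
      N.deficiency := by
  have hsplit := (LinearMap.range N.incidence).finrank_map_add_finrank_inf_ker N.mapY
  rw [map_mapY_range_incidence] at hsplit
  have hle := N.finrank_range_incidence_add_numLinkageClasses_le
  unfold deficiency rank
  omega

theorem finrank_ker_mapY_comp_laplacian_le (κ : ↥N.reactions → ℝ) :
    (Module.finrank ℝ (LinearMap.ker (N.mapY ∘ₗ N.laplacian κ)) : ℤ) ≤
      Module.finrank ℝ (LinearMap.ker (N.laplacian κ)) + N.deficiency := by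
  set W := LinearMap.ker (N.mapY ∘ₗ N.laplacian κ)
  have hsplit := W.finrank_map_add_finrank_inf_ker (N.laplacian κ)
  rw [inf_eq_right.2 (LinearMap.ker_le_ker_comp _ _)] at hsplit
  have hmap : W.map (N.laplacian κ) ≤ LinearMap.range N.incidence ⊓ LinearMap.ker N.mapY := by
    rintro _ ⟨x, hx, rfl⟩
    exact ⟨N.range_laplacian_le_range_incidence κ ⟨x, rfl⟩, hx⟩
  have hle := Submodule.finrank_mono hmap
  have hδ := N.finrank_range_incidence_inf_ker_mapY_le_deficiency
  omega

theorem reach_mem_complexes {a b : S → ℝ} (ha : a ∈ N.complexes) (h : N.reach a b) :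
    b ∈ N.complexes := by
  induction h with
  | refl => exact ha
  | tail _ h _ => exact N.mem_target _ h

theorem isTerminal_of_mem_tslc {L : Set (S → ℝ)} (hL : L ∈ N.tslc) {z : S → ℝ}
    (hz : z ∈ L) : N.IsTerminal z := by
  obtain ⟨y, hy, rfl⟩ := hL
  exact ⟨N.reach_mem_complexes hy.1 hz.1, fun w hw => (hy.2 w (hz.1.trans hw)).trans hz.1⟩

end CRN

theorem basis_ker_YAk_of_deficiency_one_general {S : Type*} [Fintype S] (N : CRN S)
    (hδ : N.deficiency = 1)
    (hnt : ∃ y, N.Nonterminal y)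
    (κ : ↥N.reactions → ℝ)
    (hκ : ∑ r : ↥N.reactions, κ r • ((r.1.2 : S → ℝ) - r.1.1) = 0)
    (b : ↥N.tslc → (↥N.complexes → ℝ))
    (hli : LinearIndependent ℝ b)
    (hspan : Submodule.span ℝ (Set.range b) = LinearMap.ker (N.laplacian κ))
    (hsupp : ∀ L : ↥N.tslc, ∀ y : ↥N.complexes,
      b L y ≠ 0 ↔ (y : S → ℝ) ∈ (L : Set (S → ℝ))) :
    LinearIndependent ℝ
      (fun o : Option ↥N.tslc => o.elim (1 : ↥N.complexes → ℝ) b) ∧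
    Submodule.span ℝ
      (Set.range (fun o : Option ↥N.tslc => o.elim (1 : ↥N.complexes → ℝ) b)) =
      LinearMap.ker (N.mapY ∘ₗ N.laplacian κ) ∧
    Module.finrank ℝ ↥(LinearMap.ker (N.mapY ∘ₗ N.laplacian κ)) = 1 + N.numTSLC := by
  obtain ⟨y, hy, hy_nonterminal⟩ := hnt
  have : Finite N.tslc := hli.finite
  have := Fintype.ofFinite N.tslc
  have hb_y : ∀ L, b L ⟨y, hy⟩ = 0 := fun L => not_not.1 fun h =>
    hy_nonterminal (N.isTerminal_of_mem_tslc L.2 ((hsupp L _).1 h))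
  have hindep : LinearIndependent ℝ (fun o : Option ↥N.tslc => o.elim 1 b) :=
    linearIndependent_option.2 ⟨hli, Submodule.one_notMem_span_of_apply_eq_zero _ hb_y⟩
  have hle : Submodule.span ℝ (Set.range fun o : Option ↥N.tslc => o.elim 1 b) ≤
      LinearMap.ker (N.mapY ∘ₗ N.laplacian κ) := by
    rw [Submodule.span_le]
    rintro _ ⟨_ | L, rfl⟩
    · exact (N.mapY_laplacian_one κ).trans hκ
    · exact LinearMap.ker_le_ker_comp _ _ (hspan ▸ Submodule.subset_span ⟨L, rfl⟩)
  have hcard : Module.finrank ℝ (Submodule.span ℝ (Set.range fun o : Option ↥N.tslc =>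
      o.elim 1 b)) = 1 + N.numTSLC := by
    rw [finrank_span_eq_card hindep, Fintype.card_option, CRN.numTSLC,
      Nat.card_eq_fintype_card, add_comm]
  have hker : Module.finrank ℝ (LinearMap.ker (N.laplacian κ)) = N.numTSLC := by
    rw [← hspan, finrank_span_eq_card hli, CRN.numTSLC, Nat.card_eq_fintype_card]
  have hupper := N.finrank_ker_mapY_comp_laplacian_le κ
  rw [hker, hδ] at hupper
  have heq := Submodule.eq_of_le_of_finrank_le hle (by omega)
  exact ⟨hindep, heq, heq ▸ hcard⟩

/-- For a deficiency-one CRN with a nonterminal complex and `κ > 0` with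
`Σ κ_{y→y'} (y'-y) = 0` (equivalently `1^C ∈ Ker (Y ∘ A_κ)`):
if `b^1, …, b^t` is a basis of `Ker A_κ` whose supports are the terminal strong
linkage classes, then `{1^C, b^1, …, b^t}` is a basis of `Ker (Y ∘ A_κ)`;
in particular `dim Ker (Y ∘ A_κ) = 1 + t`. -/
theorem basis_ker_YAk_of_deficiency_one {S : Type*} [Fintype S] (N : CRN S)
    (hδ : N.deficiency = 1)
    (hnt : ∃ y, N.Nonterminal y)
    (κ : ↥N.reactions → ℝ) (hκpos : ∀ r, 0 < κ r)
    (hκ : ∑ r : ↥N.reactions, κ r • ((r.1.2 : S → ℝ) - r.1.1) = 0)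
    (b : ↥N.tslc → (↥N.complexes → ℝ))
    (hli : LinearIndependent ℝ b)
    (hspan : Submodule.span ℝ (Set.range b) = LinearMap.ker (N.laplacian κ))
    (hsupp : ∀ L : ↥N.tslc, ∀ y : ↥N.complexes,
      b L y ≠ 0 ↔ (y : S → ℝ) ∈ (L : Set (S → ℝ))) :
    LinearIndependent ℝ
      (fun o : Option ↥N.tslc => o.elim (1 : ↥N.complexes → ℝ) b) ∧
    Submodule.span ℝ
      (Set.range (fun o : Option ↥N.tslc => o.elim (1 : ↥N.complexes → ℝ) b)) =
      LinearMap.ker (N.mapY ∘ₗ N.laplacian κ) ∧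
    Module.finrank ℝ ↥(LinearMap.ker (N.mapY ∘ₗ N.laplacian κ)) = 1 + N.numTSLC :=
  basis_ker_YAk_of_deficiency_one_general N hδ hnt κ hκ b hli hspan hsupp
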